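/- Let (T₀, T₃) be a combinatorial triangulation with N ≥ 1 vertices and let r(t), t ∈ [0,T) (possibly T = ∞), be a solution of the extended combinatorial Yamabe flow. Then there exists a constant C₃ > 0, depending only on the initial data r(0) and the triangulation, such that rᵢ(t) ≤ C₃ for all vertices i ∈ T₀ and all t ∈ [0,T). -/
import Mathlib


open Real Finset Filter

/-- `y i = coth r i`. -/
noncomputable def yc (r : Fin 4 → ℝ) (i : Fin 4) : ℝ := Real.cosh (r i) / Real.sinh (r i)

/-- The quantity `Q(r)` whose positivity characterizes non-degenerate hyperbolic tetrahedra. -/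
noncomputable def Qh (r : Fin 4 → ℝ) : ℝ :=
  (∑ i, yc r i) ^ 2 - 2 * ∑ i, (yc r i) ^ 2 + 4

/-- The set of real ball packings of a tetrahedron. -/
noncomputable def OmegaSet : Set (Fin 4 → ℝ) := {r | (∀ i, 0 < r i) ∧ 0 < Qh r}

/-- The `i`-th virtual tetrahedron space `Dᵢ`. -/
noncomputable def Dset (i : Fin 4) : Set (Fin 4 → ℝ) :=
  {r | (∀ m, 0 < r m) ∧
    (∑ j ∈ Finset.univ.erase i, yc r j)
      + 2 * Real.sqrt (((∑ j ∈ Finset.univ.erase i, yc r j) ^ 2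
          - ∑ j ∈ Finset.univ.erase i, (yc r j) ^ 2) / 2 + 1) ≤ yc r i}

/-- The dihedral angle `β i j` of the hyperbolic tetrahedron determined by `r`. -/
noncomputable def betaAngle (r : Fin 4 → ℝ) (i j : Fin 4) : ℝ :=
  Real.arccos
    ((Real.sinh (r i) * Real.sinh (r j)
        * Real.sqrt (∏ m ∈ (Finset.univ.erase i).erase j, Real.sinh (r m)))
      / (4 * Real.sqrt (∏ m ∈ (Finset.univ.erase i).erase j, Real.sinh (r i + r j + r m)))
      * (Qh r - (yc r i + yc r j) ^ 2
          + ((∑ m ∈ (Finset.univ.erase i).erase j, yc r m) ^ 2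
              - 4 * ∏ m ∈ (Finset.univ.erase i).erase j, yc r m)))

/-- The solid angle `αᵢ` of the hyperbolic tetrahedron determined by `r`. -/
noncomputable def solidAngle (r : Fin 4 → ℝ) (i : Fin 4) : ℝ :=
  (∑ j ∈ Finset.univ.erase i, betaAngle r i j) - Real.pi

open Classical in
/-- The extended solid angle `α̃ᵢ`. -/
noncomputable def tildeAlpha (r : Fin 4 → ℝ) (i : Fin 4) : ℝ :=
  if r ∈ OmegaSet then solidAngle r i
  else if r ∈ Dset i then 2 * Real.pi else 0

/-- Given a ball packing `r` on the vertex set `Fin N`, a vertex `i` and a tetrahedron `s`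
containing `i`, the associated local packing in `(0,∞)⁴`, with the radius of `i` first. -/
noncomputable def localPacking {N : ℕ} (r : Fin N → ℝ) (i : Fin N) (s : Finset (Fin N)) :
    Fin 4 → ℝ :=
  fun m => if m = 0 then r i
    else r (((s.erase i).sort (· ≤ ·)).getD (m.val - 1) i)

/-- The extended combinatorial scalar curvature `K̃ᵢ(r)`. -/
noncomputable def Ktilde {N : ℕ} (T3 : Multiset (Finset (Fin N))) (r : Fin N → ℝ)
    (i : Fin N) : ℝ :=
  4 * Real.pi -
    ((T3.filter (fun s => i ∈ s)).map (fun s => tildeAlpha (localPacking r i s) 0)).sum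

/-- The tetra-degree of the vertex `i`. -/
def tetraDegree {N : ℕ} (T3 : Multiset (Finset (Fin N))) (i : Fin N) : ℕ :=
  (T3.filter (fun s => i ∈ s)).card

/-- `R` is a solution of the extended combinatorial Yamabe flow on the time domain `S`. -/
def IsExtYamabeFlowSolution {N : ℕ} (T3 : Multiset (Finset (Fin N)))
    (R : ℝ → Fin N → ℝ) (S : Set ℝ) : Prop :=
  (∀ t ∈ S, ∀ i, 0 < R t i) ∧
  ∀ t ∈ S, ∀ i, HasDerivWithinAt (fun u => R u i)
      (-(Ktilde T3 (R t) i) * Real.sinh (R t i)) S t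


theorem myArccos_anti {x y : ℝ} (h : x ≤ y) : arccos y ≤ arccos x := by
  rw [Real.arccos, Real.arccos]
  have := Real.monotone_arcsin h
  linarith

theorem myArccos_mul_le (u v : ℝ) (hv0 : 0 ≤ v) (hv1 : v ≤ 1) :
    arccos (u * v) ≤ arccos u + arccos v := by
  rcases le_or_gt u (-1) with hu | hu
  · have : arccos u = π := Real.arccos_eq_pi.2 hu
    have := Real.arccos_le_pi (u * v)
    have := Real.arccos_nonneg v
    linarith
  rcases le_or_gt 1 u with hu1 | hu1
  · have h0 : arccos u = 0 := Real.arccos_eq_zero.2 hu1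
    have : v ≤ u * v := le_mul_of_one_le_left hv0 hu1
    have := myArccos_anti this
    linarith
  have hu' : -1 ≤ u := hu.le
  have hu1' : u ≤ 1 := hu1.le
  set A := arccos u
  set B := arccos v
  rcases le_or_gt π (A + B) with hpi | hpi
  · have := Real.arccos_le_pi (u * v)
    linarith
  · have hcos : Real.cos (A + B) ≤ u * v := by
      rw [Real.cos_add]
      rw [Real.cos_arccos hu' hu1', Real.cos_arccos (by linarith) hv1]
      have h1 : 0 ≤ Real.sin A := Real.sin_nonneg_of_nonneg_of_le_pi (Real.arccos_nonneg u) (Real.arccos_le_pi u)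
      have h2 : 0 ≤ Real.sin B := Real.sin_nonneg_of_nonneg_of_le_pi (Real.arccos_nonneg v) (Real.arccos_le_pi v)
      nlinarith
    calc arccos (u * v) ≤ arccos (Real.cos (A + B)) := myArccos_anti hcos
      _ = A + B := Real.arccos_cos (add_nonneg (Real.arccos_nonneg _) (Real.arccos_nonneg _)) hpi.le

theorem myArccos_sub_le (u h : ℝ) (h0 : 0 ≤ h) (h1 : h ≤ 1) :
    arccos (u - h) ≤ arccos u + arccos (1 - h) := by
  rcases le_or_gt (u - h) (-1) with hc | hc
  · -- then -u ≥ 1 - h, so arccos (1-h) ≥ arccos (-u) = π - arccos u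
    have : arccos (1 - h) ≥ arccos (-u) := myArccos_anti (by linarith)
    have hnu : arccos (-u) = π - arccos u := Real.arccos_neg u
    have := Real.arccos_le_pi (u - h)
    linarith
  rcases le_or_gt 1 u with hu1 | hu1
  · have hz : arccos u = 0 := Real.arccos_eq_zero.2 hu1
    have : arccos (u - h) ≤ arccos (1 - h) := myArccos_anti (by linarith)
    linarith
  have hu' : -1 ≤ u := by linarith
  set A := arccos u
  set B := arccos (1 - h)
  rcases le_or_gt π (A + B) with hpi | hpi
  · have := Real.arccos_le_pi (u - h)
    have := Real.arccos_nonneg u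
    linarith
  · have hcos : Real.cos (A + B) ≤ u - h := by
      rw [Real.cos_add]
      rw [Real.cos_arccos hu' hu1.le, Real.cos_arccos (by linarith) (by linarith)]
      have hsA : Real.sin A = Real.sqrt (1 - u ^ 2) := Real.sin_arccos u
      have hsB : Real.sin B = Real.sqrt (1 - (1 - h) ^ 2) := Real.sin_arccos (1 - h)
      rw [hsA, hsB]
      have e1 : Real.sqrt (1 - u ^ 2) ^ 2 = 1 - u ^ 2 := Real.sq_sqrt (by nlinarith)
      have e2 : Real.sqrt (1 - (1 - h) ^ 2) ^ 2 = 1 - (1 - h) ^ 2 := Real.sq_sqrt (by nlinarith)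
      have p1 : 0 ≤ Real.sqrt (1 - u ^ 2) := Real.sqrt_nonneg _
      have p2 : 0 ≤ Real.sqrt (1 - (1 - h) ^ 2) := Real.sqrt_nonneg _
      -- need : h * (1 - u) ≤ sqrt(1-u^2) * sqrt(1-(1-h)^2)
      have key : h * (1 - u) ≤ Real.sqrt (1 - u ^ 2) * Real.sqrt (1 - (1 - h) ^ 2) := by
        nlinarith [mul_nonneg p1 p2, sq_nonneg (Real.sqrt (1 - u ^ 2) * Real.sqrt (1 - (1 - h) ^ 2) - h * (1 - u)),
          mul_nonneg (mul_nonneg h0 (by linarith : (0:ℝ) ≤ 1 - u)) (by linarith : (0:ℝ) ≤ 2 + 2*u - 2*h)]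
      nlinarith
    calc arccos (u - h) ≤ arccos (Real.cos (A + B)) := myArccos_anti hcos
      _ = A + B := Real.arccos_cos (add_nonneg (Real.arccos_nonneg _) (Real.arccos_nonneg _)) hpi.le


theorem myArccos_anti' {x y : ℝ} (h : x ≤ y) : arccos y ≤ arccos x := by
  rw [Real.arccos, Real.arccos]; have := Real.monotone_arcsin h; linarith

set_option maxHeartbeats 1000000 in
/-- the sum of the three "law of cosines" arccosines is at most π, for any positive a b c. -/
theorem euclid_sum (a b c : ℝ) (ha : 0 < a) (hb : 0 < b) (hc : 0 < c) :
    arccos ((b^2+c^2-a^2)/(2*(b*c))) + arccos ((a^2+c^2-b^2)/(2*(a*c)))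
      + arccos ((a^2+b^2-c^2)/(2*(a*b))) ≤ π := by
  have hbc : (0:ℝ) < 2*(b*c) := by positivity
  have hac : (0:ℝ) < 2*(a*c) := by positivity
  have hab : (0:ℝ) < 2*(a*b) := by positivity
  rcases le_or_gt (b + c) a with htri | h1
  · -- degenerate: a too big
    have e1 : arccos ((b^2+c^2-a^2)/(2*(b*c))) = π := by
      apply Real.arccos_eq_pi.2
      rw [div_le_iff₀ hbc]; nlinarith
    have e2 : arccos ((a^2+c^2-b^2)/(2*(a*c))) = 0 := by
      apply Real.arccos_eq_zero.2
      rw [le_div_iff₀ hac]; nlinarith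
    have e3 : arccos ((a^2+b^2-c^2)/(2*(a*b))) = 0 := by
      apply Real.arccos_eq_zero.2
      rw [le_div_iff₀ hab]; nlinarith
    rw [e1, e2, e3]; ring_nf; exact le_refl _
  rcases le_or_gt (a + c) b with htri | h2
  · have e1 : arccos ((a^2+c^2-b^2)/(2*(a*c))) = π := by
      apply Real.arccos_eq_pi.2
      rw [div_le_iff₀ hac]; nlinarith
    have e2 : arccos ((b^2+c^2-a^2)/(2*(b*c))) = 0 := by
      apply Real.arccos_eq_zero.2
      rw [le_div_iff₀ hbc]; nlinarith
    have e3 : arccos ((a^2+b^2-c^2)/(2*(a*b))) = 0 := by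
      apply Real.arccos_eq_zero.2
      rw [le_div_iff₀ hab]; nlinarith
    rw [e1, e2, e3]; ring_nf; exact le_refl _
  rcases le_or_gt (a + b) c with htri | h3
  · have e1 : arccos ((a^2+b^2-c^2)/(2*(a*b))) = π := by
      apply Real.arccos_eq_pi.2
      rw [div_le_iff₀ hab]; nlinarith
    have e2 : arccos ((b^2+c^2-a^2)/(2*(b*c))) = 0 := by
      apply Real.arccos_eq_zero.2
      rw [le_div_iff₀ hbc]; nlinarith
    have e3 : arccos ((a^2+c^2-b^2)/(2*(a*c))) = 0 := by
      apply Real.arccos_eq_zero.2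
      rw [le_div_iff₀ hac]; nlinarith
    rw [e1, e2, e3]; ring_nf; exact le_refl _
  -- genuine triangle case
  set e₁ := (b^2+c^2-a^2)/(2*(b*c)) with he₁
  set e₂ := (a^2+c^2-b^2)/(2*(a*c)) with he₂
  set e₃ := (a^2+b^2-c^2)/(2*(a*b)) with he₃
  have hb1 : -1 ≤ e₁ := by rw [he₁, le_div_iff₀ hbc]; nlinarith
  have hb1' : e₁ ≤ 1 := by rw [he₁, div_le_iff₀ hbc]; nlinarith
  have hb2 : -1 ≤ e₂ := by rw [he₂, le_div_iff₀ hac]; nlinarith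
  have hb2' : e₂ ≤ 1 := by rw [he₂, div_le_iff₀ hac]; nlinarith
  have hb3 : -1 ≤ e₃ := by rw [he₃, le_div_iff₀ hab]; nlinarith
  have hb3' : e₃ ≤ 1 := by rw [he₃, div_le_iff₀ hab]; nlinarith
  have hAB : arccos e₁ + arccos e₂ ≤ π := by
    have hsum : -e₂ ≤ e₁ := by
      rw [he₁, he₂, ← neg_div, div_le_div_iff₀ hac hbc]
      nlinarith [mul_pos (mul_pos (by linarith : (0:ℝ) < a + b) (by linarith : (0:ℝ) < c + b - a)) (by linarith : (0:ℝ) < c + a - b)]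
    have := myArccos_anti' hsum
    rw [Real.arccos_neg] at this
    linarith
  -- cos (A + B) = -e₃
  have hkey : Real.cos (arccos e₁ + arccos e₂) = -e₃ := by
    rw [Real.cos_add, Real.cos_arccos hb1 hb1', Real.cos_arccos hb2 hb2',
      Real.sin_arccos, Real.sin_arccos]
    rw [← Real.sqrt_mul (by nlinarith) ]
    have hsq : (1 - e₁ ^ 2) * (1 - e₂ ^ 2) = (e₁*e₂ + e₃)^2 := by
      rw [he₁, he₂, he₃]; field_simp; ring
    rw [hsq, Real.sqrt_sq (by
      rw [he₁, he₂, he₃]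
      have expand : (b^2+c^2-a^2)/(2*(b*c)) * ((a^2+c^2-b^2)/(2*(a*c))) + (a^2+b^2-c^2)/(2*(a*b))
          = ((b^2+c^2-a^2)*(a^2+c^2-b^2) + (a^2+b^2-c^2)*(2*c^2)) / (2*(b*c)*(2*(a*c))) := by
        field_simp
      rw [expand]
      apply div_nonneg _ (by positivity)
      nlinarith [mul_nonneg (mul_nonneg (mul_nonneg (by linarith : (0:ℝ) ≤ a+b+c) (by linarith : (0:ℝ) ≤ -a+b+c)) (by linarith : (0:ℝ) ≤ a-b+c)) (by linarith : (0:ℝ) ≤ a+b-c)])]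
    ring
  have hABval : arccos e₁ + arccos e₂ = π - arccos e₃ := by
    have h0 : 0 ≤ arccos e₁ + arccos e₂ := add_nonneg (Real.arccos_nonneg _) (Real.arccos_nonneg _)
    have := Real.arccos_cos h0 hAB
    rw [hkey] at this
    rw [← this, Real.arccos_neg]
  rw [hABval]
  simp



/-- abstract fraction estimate -/
theorem frac_bound (N N0 D D0 t e w hh : ℝ) (hDpos : 0 < D) (hD0pos : 0 < D0)
    (hDl : D0 ≤ D) (hDu : D ≤ (1+t)*D0) (hD0big : 8 ≤ D0)
    (hNN0 : N0 - t^2 ≤ N) (heD0 : e * D0 = N0) (hwt : w * (1+t) = 1)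
    (hw0 : 0 ≤ w) (hw1 : w ≤ 1) (hhh : hh = t^2/8) (ht0 : 0 ≤ t) :
    e * w - hh ≤ N / D ∨ (e ≤ 0 ∧ e - hh ≤ N / D) := by
  have k3 : t^2 ≤ hh * D0 := by
    rw [hhh]
    nlinarith [mul_nonneg (sub_nonneg.2 hD0big) (sq_nonneg t)]
  rcases le_or_gt 0 e with hepos | heneg
  · left
    rcases le_or_gt 0 N with hNpos | hNneg
    · rw [le_div_iff₀ hDpos]
      have k2 : e * w * ((1+t)*D0) = N0 := by
        calc e * w * ((1+t)*D0) = (e * D0) * (w * (1+t)) := by ring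
          _ = N0 := by rw [heD0, hwt, mul_one]
      have k1 : e * w * D ≤ N0 := by
        nlinarith [mul_nonneg (mul_nonneg hepos hw0) (sub_nonneg.2 hDu)]
      have k4 : hh * D0 ≤ hh * D := by
        have hh0 : 0 ≤ hh := by rw [hhh]; positivity
        exact mul_le_mul_of_nonneg_left hDl hh0
      nlinarith
    · have s1 : N / D0 ≤ N / D := by
        rw [div_le_div_iff₀ hD0pos hDpos]
        nlinarith [mul_nonneg (neg_nonneg.2 hNneg.le) (sub_nonneg.2 hDl)]
      have s2 : e - hh ≤ N / D0 := by
        rw [le_div_iff₀ hD0pos]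
        nlinarith
      have s3 : e * w - hh ≤ e - hh := by
        nlinarith [mul_nonneg hepos (sub_nonneg.2 hw1)]
      linarith
  · right
    refine ⟨heneg.le, ?_⟩
    rcases le_or_gt 0 N with hNpos | hNneg
    · have h0 : 0 ≤ N / D := div_nonneg hNpos hDpos.le
      have hh0 : 0 ≤ hh := by rw [hhh]; positivity
      linarith
    · have s1 : N / D0 ≤ N / D := by
        rw [div_le_div_iff₀ hD0pos hDpos]
        nlinarith [mul_nonneg (neg_nonneg.2 hNneg.le) (sub_nonneg.2 hDl)]
      have s2 : e - hh ≤ N / D0 := by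
        rw [le_div_iff₀ hD0pos]
        nlinarith
      linarith

set_option maxHeartbeats 1000000 in
theorem key_arccos (t yj yk yl : ℝ) (ht0 : 0 ≤ t) (ht1 : t ≤ 1)
    (hj : 1 < yj) (hk : 1 < yk) (hl : 1 < yl) :
    arccos (((1+t+yj)*(yk+yl) - (1+t)^2 - yj^2 + 2)
        / (2 * Real.sqrt (((1+t)*yj + (1+t)*yk + yj*yk + 1) * ((1+t)*yj + (1+t)*yl + yj*yl + 1))))
      ≤ arccos ((yk+yl+1-yj) / (2*(Real.sqrt (1+yk) * Real.sqrt (1+yl))))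
        + (arccos (1/(1+t)) + arccos (1 - t^2/8)) := by
  have hPkpos : (0:ℝ) < (1+t)*yj + (1+t)*yk + yj*yk + 1 := by nlinarith
  have hPlpos : (0:ℝ) < (1+t)*yj + (1+t)*yl + yj*yl + 1 := by nlinarith
  have hPk0pos : (0:ℝ) < (1+yj)*(1+yk) := by nlinarith
  have hPl0pos : (0:ℝ) < (1+yj)*(1+yl) := by nlinarith
  have hDpos : (0:ℝ) < 2 * Real.sqrt (((1+t)*yj + (1+t)*yk + yj*yk + 1) * ((1+t)*yj + (1+t)*yl + yj*yl + 1)) := by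
    have := Real.sqrt_pos.2 (mul_pos hPkpos hPlpos); linarith
  have hD0pos : (0:ℝ) < 2 * Real.sqrt (((1+yj)*(1+yk)) * ((1+yj)*(1+yl))) := by
    have := Real.sqrt_pos.2 (mul_pos hPk0pos hPl0pos); linarith
  have hPkl : (1+yj)*(1+yk) ≤ (1+t)*yj + (1+t)*yk + yj*yk + 1 := by
    nlinarith [mul_nonneg ht0 (by linarith : (0:ℝ) ≤ yj + yk)]
  have hPll : (1+yj)*(1+yl) ≤ (1+t)*yj + (1+t)*yl + yj*yl + 1 := by
    nlinarith [mul_nonneg ht0 (by linarith : (0:ℝ) ≤ yj + yl)]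
  have hPku : (1+t)*yj + (1+t)*yk + yj*yk + 1 ≤ (1+t)*((1+yj)*(1+yk)) := by
    nlinarith [mul_nonneg ht0 (by nlinarith : (0:ℝ) ≤ 1 + yj*yk)]
  have hPlu : (1+t)*yj + (1+t)*yl + yj*yl + 1 ≤ (1+t)*((1+yj)*(1+yl)) := by
    nlinarith [mul_nonneg ht0 (by nlinarith : (0:ℝ) ≤ 1 + yj*yl)]
  have hDl : 2 * Real.sqrt (((1+yj)*(1+yk)) * ((1+yj)*(1+yl)))
      ≤ 2 * Real.sqrt (((1+t)*yj + (1+t)*yk + yj*yk + 1) * ((1+t)*yj + (1+t)*yl + yj*yl + 1)) := by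
    have := Real.sqrt_le_sqrt (mul_le_mul hPkl hPll hPl0pos.le (by positivity) :
      ((1+yj)*(1+yk)) * ((1+yj)*(1+yl)) ≤ ((1+t)*yj + (1+t)*yk + yj*yk + 1) * ((1+t)*yj + (1+t)*yl + yj*yl + 1))
    linarith
  have hDu : 2 * Real.sqrt (((1+t)*yj + (1+t)*yk + yj*yk + 1) * ((1+t)*yj + (1+t)*yl + yj*yl + 1))
      ≤ (1+t) * (2 * Real.sqrt (((1+yj)*(1+yk)) * ((1+yj)*(1+yl)))) := by
    have h1 : ((1+t)*yj + (1+t)*yk + yj*yk + 1) * ((1+t)*yj + (1+t)*yl + yj*yl + 1)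
        ≤ (1+t)^2 * (((1+yj)*(1+yk)) * ((1+yj)*(1+yl))) := by
      calc ((1+t)*yj + (1+t)*yk + yj*yk + 1) * ((1+t)*yj + (1+t)*yl + yj*yl + 1)
          ≤ ((1+t)*((1+yj)*(1+yk))) * ((1+t)*((1+yj)*(1+yl))) :=
            mul_le_mul hPku hPlu hPlpos.le (by positivity)
        _ = (1+t)^2 * (((1+yj)*(1+yk)) * ((1+yj)*(1+yl))) := by ring
    have h2 := Real.sqrt_le_sqrt h1
    rw [show Real.sqrt ((1+t)^2 * (((1+yj)*(1+yk)) * ((1+yj)*(1+yl))))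
        = (1+t) * Real.sqrt (((1+yj)*(1+yk)) * ((1+yj)*(1+yl))) from by
      rw [Real.sqrt_mul (sq_nonneg (1+t)), Real.sqrt_sq (by linarith : (0:ℝ) ≤ 1+t)]] at h2
    linarith
  have hD0big : (8:ℝ) ≤ 2 * Real.sqrt (((1+yj)*(1+yk)) * ((1+yj)*(1+yl))) := by
    have h16 : (16:ℝ) ≤ ((1+yj)*(1+yk)) * ((1+yj)*(1+yl)) := by
      have a4 : (4:ℝ) ≤ (1+yj)*(1+yk) := by nlinarith
      have b4 : (4:ℝ) ≤ (1+yj)*(1+yl) := by nlinarith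
      nlinarith [mul_nonneg (by linarith : (0:ℝ) ≤ (1+yj)*(1+yk) - 4) (by linarith : (0:ℝ) ≤ (1+yj)*(1+yl) - 4)]
    have := Real.sqrt_le_sqrt h16
    rw [show (16:ℝ) = 4^2 by norm_num, Real.sqrt_sq (by norm_num : (0:ℝ) ≤ 4)] at this
    linarith
  have hsplit : Real.sqrt (((1+yj)*(1+yk)) * ((1+yj)*(1+yl)))
      = (1+yj) * (Real.sqrt (1+yk) * Real.sqrt (1+yl)) := by
    rw [show ((1+yj)*(1+yk)) * ((1+yj)*(1+yl)) = (1+yj)^2 * ((1+yk)*(1+yl)) by ring,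
      Real.sqrt_mul (by positivity), Real.sqrt_sq (by linarith : (0:ℝ) ≤ 1+yj),
      Real.sqrt_mul (by positivity)]
  have hk' : (0:ℝ) < Real.sqrt (1+yk) := Real.sqrt_pos.2 (by linarith)
  have hl' : (0:ℝ) < Real.sqrt (1+yl) := Real.sqrt_pos.2 (by linarith)
  have hk2 : Real.sqrt (1+yk) ^ 2 = 1 + yk := Real.sq_sqrt (by linarith)
  have hl2 : Real.sqrt (1+yl) ^ 2 = 1 + yl := Real.sq_sqrt (by linarith)
  have heD0 : ((yk+yl+1-yj) / (2*(Real.sqrt (1+yk) * Real.sqrt (1+yl))))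
      * (2 * Real.sqrt (((1+yj)*(1+yk)) * ((1+yj)*(1+yl)))) = (1+yj)*(yk+yl+1-yj) := by
    rw [hsplit]; field_simp
  have hNN0 : (1+yj)*(yk+yl+1-yj) - t^2 ≤ (1+t+yj)*(yk+yl) - (1+t)^2 - yj^2 + 2 := by nlinarith [mul_nonneg ht0 (by linarith : (0:ℝ) ≤ yk + yl - 2)]
  have hwt : (1/(1+t)) * (1+t) = 1 := by field_simp
  have hw0 : (0:ℝ) ≤ 1/(1+t) := by positivity
  have hw1 : 1/(1+t) ≤ 1 := by rw [div_le_one (by linarith)]; linarith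
  have := frac_bound ((1+t+yj)*(yk+yl) - (1+t)^2 - yj^2 + 2) ((1+yj)*(yk+yl+1-yj))
    (2 * Real.sqrt (((1+t)*yj + (1+t)*yk + yj*yk + 1) * ((1+t)*yj + (1+t)*yl + yj*yl + 1)))
    (2 * Real.sqrt (((1+yj)*(1+yk)) * ((1+yj)*(1+yl)))) t
    ((yk+yl+1-yj) / (2*(Real.sqrt (1+yk) * Real.sqrt (1+yl)))) (1/(1+t)) (t^2/8)
    hDpos hD0pos hDl hDu hD0big hNN0 heD0 hwt hw0 hw1 rfl ht0
  have hh0 : (0:ℝ) ≤ t^2/8 := by positivity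
  have hh1 : t^2/8 ≤ 1 := by nlinarith
  rcases this with hX | ⟨heneg, hX⟩
  · calc arccos _ ≤ arccos ((yk+yl+1-yj) / (2*(Real.sqrt (1+yk) * Real.sqrt (1+yl))) * (1/(1+t)) - t^2/8) := myArccos_anti hX
      _ ≤ arccos ((yk+yl+1-yj) / (2*(Real.sqrt (1+yk) * Real.sqrt (1+yl))) * (1/(1+t))) + arccos (1 - t^2/8) := myArccos_sub_le _ _ hh0 hh1
      _ ≤ (arccos ((yk+yl+1-yj) / (2*(Real.sqrt (1+yk) * Real.sqrt (1+yl)))) + arccos (1/(1+t))) + arccos (1 - t^2/8) := by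
          have := myArccos_mul_le ((yk+yl+1-yj) / (2*(Real.sqrt (1+yk) * Real.sqrt (1+yl)))) (1/(1+t)) hw0 hw1
          linarith
      _ = _ := by ring
  · calc arccos _ ≤ arccos ((yk+yl+1-yj) / (2*(Real.sqrt (1+yk) * Real.sqrt (1+yl))) - t^2/8) := myArccos_anti hX
      _ ≤ arccos ((yk+yl+1-yj) / (2*(Real.sqrt (1+yk) * Real.sqrt (1+yl)))) + arccos (1 - t^2/8) := myArccos_sub_le _ _ hh0 hh1
      _ ≤ _ := by
          have := Real.arccos_nonneg (1/(1+t))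
          linarith

theorem key_arccos' (y0 yj yk yl : ℝ) (h0 : 1 ≤ y0) (h0' : y0 ≤ 2)
    (hj : 1 < yj) (hk : 1 < yk) (hl : 1 < yl) :
    arccos (((y0+yj)*(yk+yl) - y0^2 - yj^2 + 2)
        / (2 * Real.sqrt ((y0*yj + y0*yk + yj*yk + 1) * (y0*yj + y0*yl + yj*yl + 1))))
      ≤ arccos ((yk+yl+1-yj) / (2*(Real.sqrt (1+yk) * Real.sqrt (1+yl))))
        + (arccos (1/y0) + arccos (1 - (y0-1)^2/8)) := by
  have h := key_arccos (y0-1) yj yk yl (by linarith) (by linarith) hj hk hl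
  rw [show 1+(y0-1) = y0 from by ring] at h
  exact h




theorem sinh_three (a b c : ℝ) (ha : Real.sinh a ≠ 0) (hb : Real.sinh b ≠ 0)
    (hc : Real.sinh c ≠ 0) :
    Real.sinh (a+b+c) = Real.sinh a * Real.sinh b * Real.sinh c *
      ((Real.cosh a/Real.sinh a)*(Real.cosh b/Real.sinh b)
        + (Real.cosh a/Real.sinh a)*(Real.cosh c/Real.sinh c)
        + (Real.cosh b/Real.sinh b)*(Real.cosh c/Real.sinh c) + 1) := by
  rw [show a+b+c = (a+b)+c from rfl, Real.sinh_add, Real.sinh_add, Real.cosh_add]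
  field_simp
  ring

theorem yc_gt_one (r : Fin 4 → ℝ) (hpos : ∀ m, 0 < r m) (m : Fin 4) : 1 < yc r m := by
  have hs : 0 < Real.sinh (r m) := Real.sinh_pos_iff.2 (hpos m)
  rw [yc, lt_div_iff₀ hs]
  have := Real.cosh_sub_sinh (r m)
  nlinarith [Real.exp_pos (-(r m))]

theorem beta_le (r : Fin 4 → ℝ) (hpos : ∀ m, 0 < r m) (j k l : Fin 4)
    (hjkl : (Finset.univ.erase (0 : Fin 4)).erase j = {k, l}) (hkl : k ≠ l)
    (h2 : ∑ i, yc r i = yc r 0 + yc r j + yc r k + yc r l)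
    (h3 : ∑ i, (yc r i)^2 = (yc r 0)^2 + (yc r j)^2 + (yc r k)^2 + (yc r l)^2)
    (hy0 : yc r 0 ≤ 2) :
    betaAngle r 0 j ≤ arccos ((yc r k + yc r l + 1 - yc r j)
        / (2*(Real.sqrt (1 + yc r k) * Real.sqrt (1 + yc r l))))
      + (arccos (1 / yc r 0) + arccos (1 - (yc r 0 - 1)^2/8)) := by
  have hs : ∀ m, 0 < Real.sinh (r m) := fun m => Real.sinh_pos_iff.2 (hpos m)
  have hy : ∀ m, 1 < yc r m := yc_gt_one r hpos
  have hPkpos : (0:ℝ) < yc r 0 * yc r j + yc r 0 * yc r k + yc r j * yc r k + 1 := by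
    nlinarith [hy 0, hy j, hy k]
  have hPlpos : (0:ℝ) < yc r 0 * yc r j + yc r 0 * yc r l + yc r j * yc r l + 1 := by
    nlinarith [hy 0, hy j, hy l]
  unfold betaAngle
  rw [hjkl, Finset.sum_pair hkl, Finset.prod_pair hkl, Finset.prod_pair hkl, Finset.prod_pair hkl]
  have hSk := sinh_three (r 0) (r j) (r k) (hs 0).ne' (hs j).ne' (hs k).ne'
  have hSl := sinh_three (r 0) (r j) (r l) (hs 0).ne' (hs j).ne' (hs l).ne'
  simp only [show ∀ m, Real.cosh (r m)/Real.sinh (r m) = yc r m from fun m => rfl] at hSk hSl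
  have hB : Qh r - (yc r 0 + yc r j)^2 + ((yc r k + yc r l)^2 - 4*(yc r k * yc r l))
      = 2*((yc r 0 + yc r j)*(yc r k + yc r l) - (yc r 0)^2 - (yc r j)^2 + 2) := by
    simp only [Qh]; rw [h2, h3]; ring
  have hprodSS : Real.sinh (r 0 + r j + r k) * Real.sinh (r 0 + r j + r l)
      = (Real.sinh (r 0) * Real.sinh (r j))^2 * ((Real.sinh (r k) * Real.sinh (r l)) *
        ((yc r 0 * yc r j + yc r 0 * yc r k + yc r j * yc r k + 1)
          * (yc r 0 * yc r j + yc r 0 * yc r l + yc r j * yc r l + 1))) := by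
    rw [hSk, hSl]; ring
  have hsqrtSS : Real.sqrt (Real.sinh (r 0 + r j + r k) * Real.sinh (r 0 + r j + r l))
      = (Real.sinh (r 0) * Real.sinh (r j)) * (Real.sqrt (Real.sinh (r k) * Real.sinh (r l)) *
        Real.sqrt ((yc r 0 * yc r j + yc r 0 * yc r k + yc r j * yc r k + 1)
          * (yc r 0 * yc r j + yc r 0 * yc r l + yc r j * yc r l + 1))) := by
    rw [hprodSS, Real.sqrt_mul (sq_nonneg _), Real.sqrt_sq (mul_pos (hs 0) (hs j)).le,
      Real.sqrt_mul (mul_pos (hs k) (hs l)).le]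
  have hsqskl : (0:ℝ) < Real.sqrt (Real.sinh (r k) * Real.sinh (r l)) :=
    Real.sqrt_pos.2 (mul_pos (hs k) (hs l))
  have hsqP : (0:ℝ) < Real.sqrt ((yc r 0 * yc r j + yc r 0 * yc r k + yc r j * yc r k + 1)
      * (yc r 0 * yc r j + yc r 0 * yc r l + yc r j * yc r l + 1)) :=
    Real.sqrt_pos.2 (mul_pos hPkpos hPlpos)
  have harg : (Real.sinh (r 0) * Real.sinh (r j) * Real.sqrt (Real.sinh (r k) * Real.sinh (r l)))
      / (4 * Real.sqrt (Real.sinh (r 0 + r j + r k) * Real.sinh (r 0 + r j + r l)))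
      * (Qh r - (yc r 0 + yc r j)^2 + ((yc r k + yc r l)^2 - 4*(yc r k * yc r l)))
      = ((yc r 0 + yc r j)*(yc r k + yc r l) - (yc r 0)^2 - (yc r j)^2 + 2)
        / (2 * Real.sqrt ((yc r 0 * yc r j + yc r 0 * yc r k + yc r j * yc r k + 1)
            * (yc r 0 * yc r j + yc r 0 * yc r l + yc r j * yc r l + 1))) := by
    have hne : (0:ℝ) < 4 * (Real.sinh (r 0) * Real.sinh (r j) * (Real.sqrt (Real.sinh (r k) * Real.sinh (r l)) *
        Real.sqrt ((yc r 0 * yc r j + yc r 0 * yc r k + yc r j * yc r k + 1)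
          * (yc r 0 * yc r j + yc r 0 * yc r l + yc r j * yc r l + 1)))) := by
      have := mul_pos (mul_pos (hs 0) (hs j)) (mul_pos hsqskl hsqP)
      linarith
    have hne2 : (0:ℝ) < 2 * Real.sqrt ((yc r 0 * yc r j + yc r 0 * yc r k + yc r j * yc r k + 1)
          * (yc r 0 * yc r j + yc r 0 * yc r l + yc r j * yc r l + 1)) := by linarith
    rw [hsqrtSS, hB, mul_assoc, div_mul_eq_mul_div, div_eq_div_iff hne.ne' hne2.ne']
    ring
  rw [harg]
  exact key_arccos' (yc r 0) (yc r j) (yc r k) (yc r l) (hy 0).le hy0 (hy j) (hy k) (hy l)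

theorem tildeAlpha_le_bound (r : Fin 4 → ℝ) (hpos : ∀ m, 0 < r m) (hy0 : yc r 0 ≤ 2) :
    tildeAlpha r 0 ≤ 3 * (arccos (1 / yc r 0) + arccos (1 - (yc r 0 - 1)^2/8)) := by
  have hy : ∀ m, 1 < yc r m := yc_gt_one r hpos
  have hW : (0:ℝ) ≤ arccos (1 / yc r 0) + arccos (1 - (yc r 0 - 1)^2/8) := by
    have := Real.arccos_nonneg (1 / yc r 0)
    have := Real.arccos_nonneg (1 - (yc r 0 - 1)^2/8)
    linarith
  have huniv : (Finset.univ.erase (0:Fin 4)) = {1,2,3} := by decide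
  unfold tildeAlpha
  split_ifs with h1 h2
  · -- Omega case
    unfold solidAngle
    rw [huniv, show ({1,2,3}:Finset (Fin 4)) = insert 1 (insert 2 ({3}:Finset (Fin 4))) from rfl,
      Finset.sum_insert (by decide), Finset.sum_insert (by decide), Finset.sum_singleton]
    have hb1 := beta_le r hpos 1 2 3 (by decide) (by decide)
      (by rw [Fin.sum_univ_four]) (by rw [Fin.sum_univ_four]) hy0
    have hb2 := beta_le r hpos 2 1 3 (by decide) (by decide)
      (by rw [Fin.sum_univ_four]; ring) (by rw [Fin.sum_univ_four]; ring) hy0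
    have hb3 := beta_le r hpos 3 1 2 (by decide) (by decide)
      (by rw [Fin.sum_univ_four]; ring) (by rw [Fin.sum_univ_four]; ring) hy0
    have hsq1 : Real.sqrt (1 + yc r 1) ^ 2 = 1 + yc r 1 := Real.sq_sqrt (by linarith [hy 1])
    have hsq2 : Real.sqrt (1 + yc r 2) ^ 2 = 1 + yc r 2 := Real.sq_sqrt (by linarith [hy 2])
    have hsq3 : Real.sqrt (1 + yc r 3) ^ 2 = 1 + yc r 3 := Real.sq_sqrt (by linarith [hy 3])
    have E := euclid_sum (Real.sqrt (1 + yc r 1)) (Real.sqrt (1 + yc r 2)) (Real.sqrt (1 + yc r 3))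
      (Real.sqrt_pos.2 (by linarith [hy 1])) (Real.sqrt_pos.2 (by linarith [hy 2]))
      (Real.sqrt_pos.2 (by linarith [hy 3]))
    rw [hsq1, hsq2, hsq3] at E
    rw [show (1 + yc r 2) + (1 + yc r 3) - (1 + yc r 1) = yc r 2 + yc r 3 + 1 - yc r 1 from by ring,
      show (1 + yc r 1) + (1 + yc r 3) - (1 + yc r 2) = yc r 1 + yc r 3 + 1 - yc r 2 from by ring,
      show (1 + yc r 1) + (1 + yc r 2) - (1 + yc r 3) = yc r 1 + yc r 2 + 1 - yc r 3 from by ring] at E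
    linarith
  · -- Dset case: impossible since yc r 0 ≤ 2
    exfalso
    obtain ⟨-, hle⟩ := h2
    rw [huniv, show ({1,2,3}:Finset (Fin 4)) = insert 1 (insert 2 ({3}:Finset (Fin 4))) from rfl,
      Finset.sum_insert (by decide), Finset.sum_insert (by decide), Finset.sum_singleton,
      Finset.sum_insert (by decide), Finset.sum_insert (by decide), Finset.sum_singleton] at hle
    nlinarith [hy 1, hy 2, hy 3, Real.sqrt_nonneg (((yc r 1 + (yc r 2 + yc r 3)) ^ 2
      - (yc r 1 ^ 2 + (yc r 2 ^ 2 + yc r 3 ^ 2))) / 2 + 1)]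
  · linarith

/-- the bounding function -/
noncomputable def Wb (x : ℝ) : ℝ :=
  3 * (arccos (1 / (Real.cosh x / Real.sinh x))
    + arccos (1 - (Real.cosh x / Real.sinh x - 1)^2/8))

theorem coth_sub_one_tendsto :
    Tendsto (fun x => Real.cosh x / Real.sinh x - 1) atTop (nhds 0) := by
  have hsinh : Tendsto Real.sinh atTop atTop :=
    tendsto_atTop_mono' atTop
      (by filter_upwards [eventually_ge_atTop (0:ℝ)] with x hx
          exact Real.self_le_sinh_iff.2 hx) tendsto_id
  have hinv : Tendsto (fun x => (Real.sinh x)⁻¹) atTop (nhds 0) := hsinh.inv_tendsto_atTop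
  have hlow : ∀ᶠ x in atTop, 0 ≤ Real.cosh x / Real.sinh x - 1 := by
    filter_upwards [eventually_gt_atTop (0:ℝ)] with x hx
    have hs : 0 < Real.sinh x := Real.sinh_pos_iff.2 hx
    rw [sub_nonneg, le_div_iff₀ hs]
    nlinarith [Real.cosh_sub_sinh x, Real.exp_pos (-x)]
  have hup : ∀ᶠ x in atTop, Real.cosh x / Real.sinh x - 1 ≤ (Real.sinh x)⁻¹ := by
    filter_upwards [eventually_gt_atTop (0:ℝ)] with x hx
    have hs : 0 < Real.sinh x := Real.sinh_pos_iff.2 hx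
    have he : Real.cosh x / Real.sinh x - 1 = Real.exp (-x) / Real.sinh x := by
      rw [eq_div_iff hs.ne', sub_mul, div_mul_cancel₀ _ hs.ne', one_mul]
      exact Real.cosh_sub_sinh x
    rw [he, inv_eq_one_div, div_le_div_iff₀ hs hs]
    nlinarith [Real.exp_le_one_iff.2 (by linarith : -x ≤ 0)]
  exact squeeze_zero' hlow hup hinv

theorem coth_tendsto : Tendsto (fun x => Real.cosh x / Real.sinh x) atTop (nhds 1) := by
  have h := coth_sub_one_tendsto.add_const 1
  rw [zero_add] at h
  exact h.congr (fun x => by ring)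

theorem Wb_tendsto : Tendsto Wb atTop (nhds 0) := by
  have h1 : Tendsto (fun x => 1 / (Real.cosh x / Real.sinh x)) atTop (nhds 1) := by
    have h := coth_tendsto.inv₀ one_ne_zero
    rw [inv_one] at h
    exact h.congr (fun x => (one_div _).symm)
  have ha1 : Tendsto (fun x => arccos (1 / (Real.cosh x / Real.sinh x))) atTop (nhds 0) := by
    have := (Real.continuous_arccos.continuousAt (x := 1)).tendsto.comp h1
    rwa [Real.arccos_one] at this
  have h2 : Tendsto (fun x => 1 - (Real.cosh x / Real.sinh x - 1)^2/8) atTop (nhds 1) := by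
    have h3 := ((coth_sub_one_tendsto.pow 2).div_const 8).const_sub 1
    rw [show (1:ℝ) - (0:ℝ)^2/8 = 1 by norm_num] at h3
    exact h3
  have ha2 : Tendsto (fun x => arccos (1 - (Real.cosh x / Real.sinh x - 1)^2/8)) atTop (nhds 0) := by
    have := (Real.continuous_arccos.continuousAt (x := 1)).tendsto.comp h2
    rwa [Real.arccos_one] at this
  have h := (ha1.add ha2).const_mul (3:ℝ)
  rw [show (3:ℝ) * (0 + 0) = 0 by norm_num] at h
  exact h

theorem exists_threshold (ε : ℝ) (hε : 0 < ε) :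
    ∃ C : ℝ, 1 ≤ C ∧ ∀ x, C ≤ x → Wb x ≤ ε ∧ Real.cosh x / Real.sinh x ≤ 2 := by
  have h1 : ∀ᶠ x in atTop, Wb x ≤ ε := Wb_tendsto.eventually_le_const hε
  have h2 : ∀ᶠ x in atTop, Real.cosh x / Real.sinh x ≤ 2 :=
    coth_tendsto.eventually_le_const (by norm_num : (1:ℝ) < 2)
  obtain ⟨C0, hC0⟩ := eventually_atTop.1 (h1.and h2)
  exact ⟨max C0 1, le_max_right _ _, fun x hx => hC0 x (le_trans (le_max_left _ _) hx)⟩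

theorem Ktilde_nonneg {n : ℕ} (T3 : Multiset (Finset (Fin n))) (R : Fin n → ℝ)
    (hpos : ∀ m, 0 < R m) (i : Fin n) (C : ℝ)
    (hC : ∀ x, C ≤ x → Wb x ≤ 4*π/(Multiset.card T3+1) ∧ Real.cosh x / Real.sinh x ≤ 2)
    (hRi : C ≤ R i) : 0 ≤ Ktilde T3 R i := by
  set ε : ℝ := 4*π/(Multiset.card T3+1) with hε
  have hεpos : 0 ≤ ε := by
    rw [hε]; positivity
  have hsum : ((T3.filter (fun s => i ∈ s)).map
      (fun s => tildeAlpha (localPacking R i s) 0)).sum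
      ≤ (Multiset.card ((T3.filter (fun s => i ∈ s)).map
          (fun s => tildeAlpha (localPacking R i s) 0))) • ε := by
    apply Multiset.sum_le_card_nsmul
    intro x hx
    obtain ⟨s, hs, rfl⟩ := Multiset.mem_map.1 hx
    have hlp : ∀ m, 0 < localPacking R i s m := by
      intro m
      by_cases h : m = 0 <;> simp [localPacking, h] <;> exact hpos _
    have h00 : localPacking R i s 0 = R i := by simp [localPacking]
    have hyc : yc (localPacking R i s) 0 = Real.cosh (R i) / Real.sinh (R i) := by
      rw [yc, h00]
    have hb := tildeAlpha_le_bound (localPacking R i s) hlp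
      (by rw [hyc]; exact (hC _ hRi).2)
    rw [hyc] at hb
    have hW := (hC _ hRi).1
    unfold Wb at hW
    exact hb.trans hW
  rw [Multiset.card_map, nsmul_eq_mul] at hsum
  have hcard : (Multiset.card (T3.filter (fun s => i ∈ s)) : ℝ) ≤ Multiset.card T3 := by
    exact_mod_cast Multiset.card_le_card (Multiset.filter_le _ _)
  have h1 : (Multiset.card (T3.filter (fun s => i ∈ s)) : ℝ) * ε ≤ (Multiset.card T3 : ℝ) * ε :=
    mul_le_mul_of_nonneg_right hcard hεpos
  have h2 : (Multiset.card T3 : ℝ) * ε ≤ 4*π := by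
    rw [hε, mul_div_assoc']
    rw [div_le_iff₀ (show (0:ℝ) < (Multiset.card T3 : ℝ) + 1 by positivity)]
    nlinarith [Real.pi_pos, (by positivity : (0:ℝ) ≤ (Multiset.card T3 : ℝ))]
  unfold Ktilde
  linarith

/-- Any solution of the extended combinatorial Yamabe flow on `[0,T)`
(possibly `T = ∞`) is uniformly bounded above by a constant depending only on the initial
data and the triangulation. -/
theorem stmt14 {N : ℕ} (hN : 1 ≤ N) (T3 : Multiset (Finset (Fin N)))
    (hT : ∀ s ∈ T3, s.card = 4) (S : Set ℝ)
    (hS : S = Set.Ici (0:ℝ) ∨ ∃ T : ℝ, S = Set.Ico 0 T)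
    (R : ℝ → Fin N → ℝ) (hR : IsExtYamabeFlowSolution T3 R S) :
    ∃ C₃ : ℝ, 0 < C₃ ∧ ∀ i, ∀ t ∈ S, R t i ≤ C₃ := by
  obtain ⟨hpos, hderiv⟩ := hR
  obtain ⟨C, hC1, hCprop⟩ := exists_threshold (4*π/(Multiset.card T3+1)) (by positivity)
  by_cases hSne : S.Nonempty
  swap
  · exact ⟨1, one_pos, fun i t ht => absurd ⟨t, ht⟩ hSne⟩
  have h0S : (0:ℝ) ∈ S := by
    rcases hS with rfl | ⟨T, rfl⟩
    · exact Set.self_mem_Ici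
    · obtain ⟨t, ht⟩ := hSne
      exact ⟨le_refl 0, lt_of_le_of_lt ht.1 ht.2⟩
  set M : ℝ := C + ∑ j, |R 0 j| with hM
  have hMC : C ≤ M := by
    have : (0:ℝ) ≤ ∑ j, |R 0 j| := Finset.sum_nonneg (fun j _ => abs_nonneg _)
    linarith
  have hM0 : 0 < M := lt_of_lt_of_le (by linarith) hMC
  have hMi : ∀ i, R 0 i ≤ M := by
    intro i
    have h1 : |R 0 i| ≤ ∑ j, |R 0 j| :=
      Finset.single_le_sum (f := fun j => |R 0 j|) (fun j _ => abs_nonneg _) (Finset.mem_univ i)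
    have := le_abs_self (R 0 i)
    linarith
  refine ⟨M, hM0, ?_⟩
  intro i t ht
  by_contra hgt
  push_neg at hgt
  have ht0 : 0 ≤ t := by
    rcases hS with rfl | ⟨T, rfl⟩
    · exact ht
    · exact ht.1
  have hIcc : Set.Icc 0 t ⊆ S := by
    rcases hS with rfl | ⟨T, rfl⟩
    · exact fun x hx => hx.1
    · exact fun x hx => ⟨hx.1, lt_of_le_of_lt hx.2 ht.2⟩
  have hcont : ContinuousOn (fun s => R s i) S := fun x hx => (hderiv x hx i).continuousWithinAt
  set A : Set ℝ := {x ∈ Set.Icc 0 t | R x i ≤ M} with hA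
  have hAne : A.Nonempty := ⟨0, ⟨⟨le_refl 0, ht0⟩, hMi i⟩⟩
  have hAbdd : BddAbove A := ⟨t, fun x hx => hx.1.2⟩
  have hAclosed : IsClosed A := by
    have heq : A = Set.Icc 0 t ∩ (fun s => R s i) ⁻¹' Set.Iic M := by
      ext x
      simp only [hA, Set.mem_sep_iff, Set.mem_inter_iff, Set.mem_preimage, Set.mem_Iic]
    rw [heq]
    exact ContinuousOn.preimage_isClosed_of_isClosed (hcont.mono hIcc) isClosed_Icc isClosed_Iic
  set u := sSup A with hu
  have huA : u ∈ A := hAclosed.csSup_mem hAne hAbdd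
  have hut : u ≤ t := huA.1.2
  have hu0 : 0 ≤ u := huA.1.1
  have huM : R u i ≤ M := huA.2
  have hunt : u < t := by
    rcases lt_or_eq_of_le hut with h | h
    · exact h
    · exfalso; rw [h] at huM; linarith
  have hmid : ∀ x, u < x → x ≤ t → M < R x i := by
    intro x h1 h2
    by_contra hle
    push_neg at hle
    have hxA : x ∈ A := ⟨⟨le_trans hu0 h1.le, h2⟩, hle⟩
    have := le_csSup hAbdd hxA
    linarith
  have hIooS : Set.Ioo u t ⊆ interior S := by
    rcases hS with rfl | ⟨T, rfl⟩
    · rw [interior_Ici]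
      exact fun x hx => lt_of_le_of_lt hu0 hx.1
    · rw [interior_Ico]
      exact fun x hx => ⟨lt_of_le_of_lt hu0 hx.1, lt_trans hx.2 ht.2⟩
  have hderivAt : ∀ x ∈ Set.Ioo u t, HasDerivAt (fun s => R s i)
      (-(Ktilde T3 (R x) i) * Real.sinh (R x i)) x := by
    intro x hx
    have hxS : x ∈ S := hIcc ⟨le_trans hu0 hx.1.le, hx.2.le⟩
    have hnhds : S ∈ nhds x := Filter.mem_of_superset
      (isOpen_interior.mem_nhds (hIooS hx)) interior_subset
    exact (hderiv x hxS i).hasDerivAt hnhds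
  have hanti : AntitoneOn (fun s => R s i) (Set.Icc u t) := by
    apply antitoneOn_of_deriv_nonpos (convex_Icc u t)
    · exact (hcont.mono hIcc).mono (Set.Icc_subset_Icc hu0 (le_refl t))
    · rw [interior_Icc]
      exact fun x hx => ((hderivAt x hx).differentiableAt).differentiableWithinAt
    · rw [interior_Icc]
      intro x hx
      rw [(hderivAt x hx).deriv]
      have hxS : x ∈ S := hIcc ⟨le_trans hu0 hx.1.le, hx.2.le⟩
      have hK : 0 ≤ Ktilde T3 (R x) i :=
        Ktilde_nonneg T3 (R x) (hpos x hxS) i C hCprop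
          (le_trans hMC (hmid x hx.1 hx.2.le).le)
      have hsinh : 0 ≤ Real.sinh (R x i) := (Real.sinh_pos_iff.2 (hpos x hxS i)).le
      nlinarith
  have hfin := hanti (Set.left_mem_Icc.2 hunt.le) (Set.right_mem_Icc.2 hunt.le) hunt.le
  simp only at hfin
  linarith
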